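/- Let Q be a unital involutive quantale in which every element is the join of the partial units below it, and define ς : Q → Q by ς a = ⨆{ b b* : b ∈ Π(Q), b ≤ a }. Then ς is a support on Q if and only if (i) a ≤ a a* a for all a ∈ Q and (ii) ς preserves arbitrary suprema. Moreover, Q admits a support if and only if conditions (i) and (ii) hold. -/

import Mathlib

/-- A partial unit in a unital involutive quantale. -/
def IsPartialUnit {Q : Type*} [CompleteLattice Q]
    (m : Q → Q → Q) (e : Q) (st : Q → Q) (a : Q) : Prop :=
  m a (st a) ≤ e ∧ m (st a) a ≤ e

/-- The candidate support `ς a = ⨆{ b b* : b ∈ Π(Q), b ≤ a }`. -/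
def suppCand {Q : Type*} [CompleteLattice Q]
    (m : Q → Q → Q) (e : Q) (st : Q → Q) (a : Q) : Q :=
  sSup ((fun b => m b (st b)) '' {b : Q | IsPartialUnit m e st b ∧ b ≤ a})

/-!
The candidate `ς` always satisfies `ς a ≤ e` and `ς a ≤ a a*`, since each of its terms `b b*` does.
Writing `a` as the join of the partial units `b ≤ a`, the regularity `b ≤ b b* b` gives
`a ≤ (ς a) a`, and conversely `a ≤ (ς a) a ≤ a a* a`. Finally any support `sp` coincides with
`ς`: for a partial unit `b` one has `b b* ≤ sp(b) b b* ≤ sp(b)` and `sp(b) ≤ b b*`, and both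
maps preserve joins, so they agree on every `a = ⨆ {b ∈ Π(Q) | b ≤ a}`.
-/

def IsSupport {Q : Type*} [CompleteLattice Q] (m : Q → Q → Q) (e : Q) (st sp : Q → Q) : Prop :=
  (∀ T : Set Q, sp (sSup T) = sSup (sp '' T)) ∧ (∀ a, sp a ≤ e) ∧
    (∀ a, sp a ≤ m a (st a)) ∧ ∀ a, a ≤ m (sp a) a

theorem monotone_of_map_sSup {α β : Type*} [CompleteLattice α] [CompleteLattice β] {f : α → β}
    (hf : ∀ s : Set α, f (sSup s) = sSup (f '' s)) : Monotone f :=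
  OrderHomClass.mono (⟨f, hf⟩ : sSupHom α β)

section

variable {Q : Type*} [CompleteLattice Q] {m : Q → Q → Q} {e : Q} {st sp : Q → Q}

theorem suppCand_le_unit (a : Q) : suppCand m e st a ≤ e := by
  apply sSup_le
  rintro _ ⟨b, ⟨hb, -⟩, rfl⟩
  exact hb.1

theorem suppCand_le_mul_star (hml : ∀ c, Monotone (m · c)) (hmr : ∀ c, Monotone (m c))
    (hst : Monotone st) (a : Q) : suppCand m e st a ≤ m a (st a) := by
  apply sSup_le
  rintro _ ⟨b, ⟨-, hba⟩, rfl⟩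
  exact (hml _ hba).trans (hmr _ (hst hba))

theorem mul_star_le_suppCand {a b : Q} (hb : IsPartialUnit m e st b) (hba : b ≤ a) :
    m b (st b) ≤ suppCand m e st a :=
  le_sSup ⟨b, ⟨hb, hba⟩, rfl⟩

theorem le_mul_suppCand (hml : ∀ c, Monotone (m · c)) (hmr : ∀ c, Monotone (m c))
    (hjoin : ∀ a : Q, a = sSup {b : Q | IsPartialUnit m e st b ∧ b ≤ a})
    (hreg : ∀ b : Q, IsPartialUnit m e st b → b ≤ m (m b (st b)) b) (a : Q) :
    a ≤ m (suppCand m e st a) a :=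
  (hjoin a).trans_le <| sSup_le fun b ⟨hb, hba⟩ =>
    calc b ≤ m (m b (st b)) b := hreg b hb
      _ ≤ m (suppCand m e st a) a :=
        (hml b (mul_star_le_suppCand hb hba)).trans (hmr _ hba)

theorem IsSupport.le_mul_mul_star (hml : ∀ c, Monotone (m · c)) (hsp : IsSupport m e st sp)
    (a : Q) : a ≤ m (m a (st a)) a :=
  (hsp.2.2.2 a).trans (hml a (hsp.2.2.1 a))

theorem IsSupport.eq_suppCand (hassoc : ∀ a b c : Q, m (m a b) c = m a (m b c))
    (her : ∀ a : Q, m a e = a) (hml : ∀ c, Monotone (m · c)) (hmr : ∀ c, Monotone (m c))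
    (hjoin : ∀ a : Q, a = sSup {b : Q | IsPartialUnit m e st b ∧ b ≤ a})
    (hsp : IsSupport m e st sp) : sp = suppCand m e st := by
  obtain ⟨hsup, -, hle, hmul⟩ := hsp
  funext a
  apply le_antisymm
  · calc sp a = sSup (sp '' {b : Q | IsPartialUnit m e st b ∧ b ≤ a}) := by
          rw [← hsup, ← hjoin a]
      _ ≤ suppCand m e st a := by
          refine sSup_le ?_
          rintro _ ⟨b, ⟨hb, hba⟩, rfl⟩
          exact (hle b).trans (mul_star_le_suppCand hb hba)
  · refine sSup_le ?_
    rintro _ ⟨b, ⟨hb, hba⟩, rfl⟩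
    calc m b (st b) ≤ m (m (sp b) b) (st b) := hml _ (hmul b)
      _ = m (sp b) (m b (st b)) := hassoc _ _ _
      _ ≤ m (sp b) e := hmr _ hb.1
      _ = sp b := her _
      _ ≤ sp a := monotone_of_map_sSup hsup hba

theorem isSupport_suppCand_iff (hml : ∀ c, Monotone (m · c)) (hmr : ∀ c, Monotone (m c))
    (hst : Monotone st) (hjoin : ∀ a : Q, a = sSup {b : Q | IsPartialUnit m e st b ∧ b ≤ a}) :
    IsSupport m e st (suppCand m e st) ↔
      (∀ a : Q, a ≤ m (m a (st a)) a) ∧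
        ∀ T : Set Q, suppCand m e st (sSup T) = sSup (suppCand m e st '' T) :=
  ⟨fun h => ⟨h.le_mul_mul_star hml, h.1⟩, fun ⟨hreg, hsup⟩ =>
    ⟨hsup, suppCand_le_unit, suppCand_le_mul_star hml hmr hst,
      le_mul_suppCand hml hmr hjoin fun b _ => hreg b⟩⟩

theorem exists_isSupport_iff (hassoc : ∀ a b c : Q, m (m a b) c = m a (m b c))
    (her : ∀ a : Q, m a e = a) (hml : ∀ c, Monotone (m · c)) (hmr : ∀ c, Monotone (m c))
    (hst : Monotone st) (hjoin : ∀ a : Q, a = sSup {b : Q | IsPartialUnit m e st b ∧ b ≤ a}) :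
    (∃ sp, IsSupport m e st sp) ↔
      (∀ a : Q, a ≤ m (m a (st a)) a) ∧
        ∀ T : Set Q, suppCand m e st (sSup T) = sSup (suppCand m e st '' T) := by
  rw [← isSupport_suppCand_iff hml hmr hst hjoin]
  refine ⟨fun ⟨sp, hsp⟩ => ?_, fun h => ⟨_, h⟩⟩
  rwa [← hsp.eq_suppCand hassoc her hml hmr hjoin]

end

theorem stmt_9_general {Q : Type*} [CompleteLattice Q]
    (m : Q → Q → Q) (e : Q) (st : Q → Q)
    (hassoc : ∀ a b c : Q, m (m a b) c = m a (m b c))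
    (hdistl : ∀ (a : Q) (T : Set Q), m a (sSup T) = sSup ((fun b => m a b) '' T))
    (hdistr : ∀ (b : Q) (T : Set Q), m (sSup T) b = sSup ((fun a => m a b) '' T))
    (her : ∀ a : Q, m a e = a)
    (hstsup : ∀ T : Set Q, st (sSup T) = sSup (st '' T))
    (hjoin : ∀ a : Q, a = sSup {b : Q | IsPartialUnit m e st b ∧ b ≤ a}) :
    (((∀ T : Set Q, suppCand m e st (sSup T) = sSup (suppCand m e st '' T)) ∧
      (∀ a : Q, suppCand m e st a ≤ e) ∧
      (∀ a : Q, suppCand m e st a ≤ m a (st a)) ∧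
      (∀ a : Q, a ≤ m (suppCand m e st a) a)) ↔
     ((∀ a : Q, a ≤ m (m a (st a)) a) ∧
      (∀ T : Set Q, suppCand m e st (sSup T) = sSup (suppCand m e st '' T)))) ∧
    ((∃ sp : Q → Q,
      (∀ T : Set Q, sp (sSup T) = sSup (sp '' T)) ∧
      (∀ a : Q, sp a ≤ e) ∧
      (∀ a : Q, sp a ≤ m a (st a)) ∧
      (∀ a : Q, a ≤ m (sp a) a)) ↔
     ((∀ a : Q, a ≤ m (m a (st a)) a) ∧
      (∀ T : Set Q, suppCand m e st (sSup T) = sSup (suppCand m e st '' T)))) := by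
  have hml : ∀ c, Monotone (m · c) := fun c => monotone_of_map_sSup (hdistr c)
  have hmr : ∀ c, Monotone (m c) := fun c => monotone_of_map_sSup (hdistl c)
  have hst : Monotone st := monotone_of_map_sSup hstsup
  exact ⟨isSupport_suppCand_iff hml hmr hst hjoin,
    exists_isSupport_iff hassoc her hml hmr hst hjoin⟩

/-- For a unital involutive quantale in which every element is the join of
the partial units below it, the candidate `ς` is a support iff `a ≤ a a* a` holds and `ς`
preserves suprema; moreover a support exists iff these two conditions hold
(Lemma `thm:inversequantale`). -/
theorem stmt_9 {Q : Type*} [CompleteLattice Q]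
    (m : Q → Q → Q) (e : Q) (st : Q → Q)
    (hassoc : ∀ a b c : Q, m (m a b) c = m a (m b c))
    (hdistl : ∀ (a : Q) (T : Set Q), m a (sSup T) = sSup ((fun b => m a b) '' T))
    (hdistr : ∀ (b : Q) (T : Set Q), m (sSup T) b = sSup ((fun a => m a b) '' T))
    (hel : ∀ a : Q, m e a = a) (her : ∀ a : Q, m a e = a)
    (hstsup : ∀ T : Set Q, st (sSup T) = sSup (st '' T))
    (hstst : ∀ a : Q, st (st a) = a)
    (hstm : ∀ a b : Q, st (m a b) = m (st b) (st a))
    (hjoin : ∀ a : Q, a = sSup {b : Q | IsPartialUnit m e st b ∧ b ≤ a}) :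
    (((∀ T : Set Q, suppCand m e st (sSup T) = sSup (suppCand m e st '' T)) ∧
      (∀ a : Q, suppCand m e st a ≤ e) ∧
      (∀ a : Q, suppCand m e st a ≤ m a (st a)) ∧
      (∀ a : Q, a ≤ m (suppCand m e st a) a)) ↔
     ((∀ a : Q, a ≤ m (m a (st a)) a) ∧
      (∀ T : Set Q, suppCand m e st (sSup T) = sSup (suppCand m e st '' T)))) ∧
    ((∃ sp : Q → Q,
      (∀ T : Set Q, sp (sSup T) = sSup (sp '' T)) ∧
      (∀ a : Q, sp a ≤ e) ∧
      (∀ a : Q, sp a ≤ m a (st a)) ∧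
      (∀ a : Q, a ≤ m (sp a) a)) ↔
     ((∀ a : Q, a ≤ m (m a (st a)) a) ∧
      (∀ T : Set Q, suppCand m e st (sSup T) = sSup (suppCand m e st '' T)))) :=
  stmt_9_general m e st hassoc hdistl hdistr her hstsup hjoin
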